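/- arXiv:math/0703141 — 2 statements merged into one kernel-verified Lean document; each statement's English description precedes it below -/
import Mathlib

section
/- Let H₁, H₂ be complex Hilbert spaces, let A : H₁ →L[ℂ] H₂ be a continuous linear map, let P : H₂ →L[ℂ] H₂ be the orthogonal projection onto the closed subspace ker A†, and let G : H₂ →L[ℂ] H₂ be a continuous linear map satisfying A ∘ A† ∘ G = id − P. Let q : H₁ → H₂ be an arbitrary function and define Π : H₁ → H₁ by Π(ω) = ω + A†(G(q ω)). Then for every ω ∈ H₁: A ω + q ω = 0 if and only if A(Π ω) = 0 and P(q ω) = 0. -/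
/-!
Since `A ∘ A† ∘ G = 1 - P`, we have `A (Π ω) = z - P (q ω)` with `z = A ω + q ω`. As the range of
`A` is orthogonal to `ker A†`, `P` kills `A ω`, so `P (q ω) = P z`; hence `z = 0` splits into the
vanishing of its components `z - P z` and `P z`.
-/

open ContinuousLinearMap

theorem add_eq_zero_iff_sub_map_eq_zero_and_map_eq_zero {M : Type*} [AddCommGroup M]
    (P : M →+ M) {a b : M} (ha : P a = 0) : a + b = 0 ↔ a + b - P b = 0 ∧ P b = 0 := by
  have hP : P (a + b) = P b := by rw [map_add, ha, zero_add]
  constructor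
  · intro h
    have hb : P b = 0 := by rw [← hP, h, map_zero]
    simp [h, hb]
  · rintro ⟨h, hb⟩
    simpa [hb] using h

theorem ContinuousLinearMap.orthogonalProjectionOnto_ker_adjoint_apply_self
    {𝕜 E F : Type*} [RCLike 𝕜] [NormedAddCommGroup E] [InnerProductSpace 𝕜 E] [CompleteSpace E]
    [NormedAddCommGroup F] [InnerProductSpace 𝕜 F] [CompleteSpace F] (T : E →L[𝕜] F) (x : E) :
    (LinearMap.ker (adjoint T : F →ₗ[𝕜] E)).orthogonalProjectionOnto (T x) = 0 := by
  rw [Submodule.orthogonalProjectionOnto_eq_zero_iff, ← T.orthogonal_range]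
  exact Submodule.le_orthogonal_orthogonal _ (LinearMap.mem_range_self (T : E →ₗ[𝕜] F) x)

/-- Abstract form of Lemma 3.11: with `P` the orthogonal projection onto `ker A†`
and `G` a Green operator for `A ∘ A†`, an element `ω` satisfies the self-duality
equation `A ω + q ω = 0` iff the Kuranishi map `Π(ω) = ω + A† (G (q ω))`
satisfies `A (Π ω) = 0` and `P (q ω) = 0`. -/
theorem stmt_5
    {H₁ H₂ : Type*}
    [NormedAddCommGroup H₁] [InnerProductSpace ℂ H₁] [CompleteSpace H₁]
    [NormedAddCommGroup H₂] [InnerProductSpace ℂ H₂] [CompleteSpace H₂]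
    (A : H₁ →L[ℂ] H₂)
    (P : H₂ →L[ℂ] H₂)
    (hP : P = (LinearMap.ker (ContinuousLinearMap.adjoint A : H₂ →ₗ[ℂ] H₁)).subtypeL.comp
        (Submodule.orthogonalProjectionOnto
          (LinearMap.ker (ContinuousLinearMap.adjoint A : H₂ →ₗ[ℂ] H₁))))
    (G : H₂ →L[ℂ] H₂)
    (hG : A.comp ((ContinuousLinearMap.adjoint A).comp G)
        = ContinuousLinearMap.id ℂ H₂ - P)
    (q : H₁ → H₂) (Pi : H₁ → H₁)
    (hPi : ∀ ω, Pi ω = ω + ContinuousLinearMap.adjoint A (G (q ω))) :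
    ∀ ω : H₁, A ω + q ω = 0 ↔ (A (Pi ω) = 0 ∧ P (q ω) = 0) := by
  intro ω
  have hPA : P (A ω) = 0 := by
    simp [hP, A.orthogonalProjectionOnto_ker_adjoint_apply_self]
  have hAPi : A (Pi ω) = A ω + q ω - P (q ω) := by
    rw [hPi, map_add, add_sub_assoc]
    exact congr_arg _ (DFunLike.congr_fun hG (q ω))
  rw [hAPi]
  exact add_eq_zero_iff_sub_map_eq_zero_and_map_eq_zero (P : H₂ →+ H₂) hPA
end

section
/- Let H₀, H₁, H₂ be complex Hilbert spaces, let B : H₀ →L[ℂ] H₁ and A : H₁ →L[ℂ] H₂ be continuous linear maps with A ∘ B = 0, let P : H₂ →L[ℂ] H₂ be the orthogonal projection onto ker A†, and let G : H₂ →L[ℂ] H₂ satisfy A ∘ A† ∘ G = id − P. Let q : H₁ → H₂ be any function and define Π(ω) = ω + A†(G(q ω)). If ω ∈ H₁ satisfies B† ω = 0 and A ω + q ω = 0, then Π(ω) ∈ ker A ∩ ker B†. -/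
/-! The equation `A ω + q ω = 0` puts `q ω` in `range A ⊆ (ker A†)ᗮ`, where the projection `P`
vanishes, so `A† ∘ G` inverts `A` there: `A (Π ω) = A ω + q ω = 0`. The other component vanishes
because `B† ∘ A† = (A ∘ B)† = 0`. -/

open ContinuousLinearMap

section

variable {𝕜 E₀ E₁ E₂ : Type*} [RCLike 𝕜]
  [NormedAddCommGroup E₀] [InnerProductSpace 𝕜 E₀] [CompleteSpace E₀]
  [NormedAddCommGroup E₁] [InnerProductSpace 𝕜 E₁] [CompleteSpace E₁]
  [NormedAddCommGroup E₂] [InnerProductSpace 𝕜 E₂] [CompleteSpace E₂]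

theorem ContinuousLinearMap.adjoint_comp_adjoint_eq_zero {B : E₀ →L[𝕜] E₁} {A : E₁ →L[𝕜] E₂}
    (hAB : A ∘L B = 0) : adjoint B ∘L adjoint A = 0 := by
  rw [← adjoint_comp, hAB, map_zero]

theorem ContinuousLinearMap.apply_mem_orthogonal_ker_adjoint (A : E₁ →L[𝕜] E₂) (x : E₁) :
    A x ∈ (LinearMap.ker (adjoint A : E₂ →ₗ[𝕜] E₁))ᗮ := by
  rw [← orthogonal_range]
  exact Submodule.le_orthogonal_orthogonal _ ⟨x, rfl⟩

theorem ContinuousLinearMap.apply_adjoint_apply_eq_self {A : E₁ →L[𝕜] E₂} {G : E₂ →L[𝕜] E₂}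
    (hG : A ∘L (adjoint A ∘L G) = ContinuousLinearMap.id 𝕜 E₂ -
      (LinearMap.ker (adjoint A : E₂ →ₗ[𝕜] E₁)).subtypeL ∘L
        (LinearMap.ker (adjoint A : E₂ →ₗ[𝕜] E₁)).orthogonalProjectionOnto)
    {y : E₂} (hy : y ∈ (LinearMap.ker (adjoint A : E₂ →ₗ[𝕜] E₁))ᗮ) :
    A (adjoint A (G y)) = y := by
  simpa [Submodule.orthogonalProjectionOnto_apply_of_mem_orthogonal hy] using congr($hG y)

end

/-- Abstract form of Lemma 3.14: the Kuranishi map `Π(ω) = ω + A† (G (q ω))`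
sends solutions of the self-duality equation `A ω + q ω = 0` with `B† ω = 0`
into the harmonic space `ker A ⊓ ker B†`. -/
theorem stmt_6
    {H₀ H₁ H₂ : Type*}
    [NormedAddCommGroup H₀] [InnerProductSpace ℂ H₀] [CompleteSpace H₀]
    [NormedAddCommGroup H₁] [InnerProductSpace ℂ H₁] [CompleteSpace H₁]
    [NormedAddCommGroup H₂] [InnerProductSpace ℂ H₂] [CompleteSpace H₂]
    (B : H₀ →L[ℂ] H₁) (A : H₁ →L[ℂ] H₂)
    (hAB : A.comp B = 0)
    (P : H₂ →L[ℂ] H₂)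
    (hP : P = (LinearMap.ker (ContinuousLinearMap.adjoint A : H₂ →ₗ[ℂ] H₁)).subtypeL.comp
        (Submodule.orthogonalProjectionOnto (LinearMap.ker (ContinuousLinearMap.adjoint A : H₂ →ₗ[ℂ] H₁))))
    (G : H₂ →L[ℂ] H₂)
    (hG : A.comp ((ContinuousLinearMap.adjoint A).comp G)
        = ContinuousLinearMap.id ℂ H₂ - P)
    (q : H₁ → H₂) (Pi : H₁ → H₁)
    (hPi : ∀ ω, Pi ω = ω + ContinuousLinearMap.adjoint A (G (q ω))) :
    ∀ ω : H₁, ContinuousLinearMap.adjoint B ω = 0 → A ω + q ω = 0 →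
      Pi ω ∈ LinearMap.ker (A : H₁ →ₗ[ℂ] H₂) ⊓ LinearMap.ker (ContinuousLinearMap.adjoint B : H₁ →ₗ[ℂ] H₀) := by
  intro ω hBω hAq
  subst hP
  have hq : q ω = A (-ω) := by rw [map_neg, eq_neg_iff_add_eq_zero, add_comm, hAq]
  have hAAG : A (adjoint A (G (q ω))) = q ω :=
    apply_adjoint_apply_eq_self hG (hq ▸ A.apply_mem_orthogonal_ker_adjoint (-ω))
  have hBA : adjoint B (adjoint A (G (q ω))) = 0 := by
    rw [← comp_apply (adjoint B), adjoint_comp_adjoint_eq_zero hAB, zero_apply]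
  constructor
  · change A (Pi ω) = 0
    rw [hPi, map_add, hAAG, hAq]
  · change adjoint B (Pi ω) = 0
    rw [hPi, map_add, hBω, hBA, add_zero]
end
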